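/- arXiv:1701.06844 — 7 statements merged into one kernel-verified Lean document; each statement's English description precedes it below -/
import Mathlib

section
/- Let F be a field of characteristic 0 and q ≥ 1. For all g, h : Fin q → ZMod 2 × ZMod 2, the product c_g · c_h equals ε · c_{g+h} for some sign ε ∈ {1, −1} (where g+h is the pointwise sum in (ZMod 2 × ZMod 2)^q). Consequently the subspaces R_g = span{c_g} satisfy R_g · R_h ⊆ R_{g+h}, i.e., they define a (ZMod 2 × ZMod 2)^q-grading on M_{2^q}(F). -/
open Matrix

def sigmaP (F : Type*) [Field F] (u : ZMod 2 × ZMod 2) : Matrix (Fin 2) (Fin 2) F :=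
  if u = (0, 0) then !![1, 0; 0, 1]
  else if u = (1, 0) then !![1, 0; 0, -1]
  else if u = (0, 1) then !![0, 1; 1, 0]
  else !![0, 1; -1, 0]

def pauliKron (F : Type*) [Field F] : {q : ℕ} → (Fin q → ZMod 2 × ZMod 2) →
    Matrix (Fin (2 ^ q)) (Fin (2 ^ q)) F
  | 0, _ => 1
  | q + 1, g =>
      Matrix.reindex (finProdFinEquiv.trans (finCongr (pow_succ 2 q).symm))
        (finProdFinEquiv.trans (finCongr (pow_succ 2 q).symm))
        (Matrix.kroneckerMap (· * ·) (pauliKron F (fun i => g i.castSucc))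
          (sigmaP F (g (Fin.last q))))

open scoped Kronecker

/-!
Each Pauli matrix squares to `±1` and any two of them multiply to `±` the third, so
`σ_u σ_v = ± σ_{u+v}` by a finite check. The mixed-product rule
`(A ⊗ B)(C ⊗ D) = AC ⊗ BD` then propagates this through the Kronecker product factor by
factor, multiplying the signs.
-/

lemma mul_eq_one_or_eq_neg_one {R : Type*} [Monoid R] [HasDistribNeg R] {a b : R}
    (ha : a = 1 ∨ a = -1) (hb : b = 1 ∨ b = -1) : a * b = 1 ∨ a * b = -1 := by
  rcases ha with rfl | rfl <;> rcases hb with rfl | rfl <;> simp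

lemma reindex_kronecker_mul_reindex_kronecker {R l n o : Type*} [CommSemiring R]
    [Fintype l] [Fintype n] [Fintype o]
    (e : l × n ≃ o) (A C : Matrix l l R) (B D : Matrix n n R) :
    reindex e e (A ⊗ₖ B) * reindex e e (C ⊗ₖ D) = reindex e e ((A * C) ⊗ₖ (B * D)) := by
  rw [reindex_apply, reindex_apply, submatrix_mul_equiv, mul_kronecker_mul, reindex_apply]

lemma mul_mem_span_singleton_of_mul_eq_smul {R A : Type*} [CommSemiring R] [Semiring A]
    [Algebra R A] {a b c : A} {ε : R} (habc : a * b = ε • c) {x y : A}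
    (hx : x ∈ Submodule.span R {a}) (hy : y ∈ Submodule.span R {b}) :
    x * y ∈ Submodule.span R {c} := by
  obtain ⟨r, rfl⟩ := Submodule.mem_span_singleton.mp hx
  obtain ⟨s, rfl⟩ := Submodule.mem_span_singleton.mp hy
  exact Submodule.mem_span_singleton.mpr ⟨r * s * ε, by rw [smul_mul_smul_comm, habc, smul_smul]⟩

section

variable (F : Type*) [Field F]

lemma sigmaP_mul_sigmaP (u v : ZMod 2 × ZMod 2) :
    ∃ ε : F, (ε = 1 ∨ ε = -1) ∧ sigmaP F u * sigmaP F v = ε • sigmaP F (u + v) := by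
  fin_cases u <;> fin_cases v <;>
    first
    | (refine ⟨1, .inl rfl, ?_⟩
       ext i j; fin_cases i <;> fin_cases j <;> simp +decide [sigmaP]
       done)
    | (refine ⟨-1, .inr rfl, ?_⟩
       ext i j; fin_cases i <;> fin_cases j <;> simp +decide [sigmaP])

lemma pauliKron_succ {q : ℕ} (g : Fin (q + 1) → ZMod 2 × ZMod 2) :
    pauliKron F g =
      reindex (finProdFinEquiv.trans (finCongr (pow_succ 2 q).symm))
        (finProdFinEquiv.trans (finCongr (pow_succ 2 q).symm))
        (pauliKron F (fun i => g i.castSucc) ⊗ₖ sigmaP F (g (Fin.last q))) :=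
  rfl

lemma pauliKron_mul_pauliKron {q : ℕ} (g h : Fin q → ZMod 2 × ZMod 2) :
    ∃ ε : F, (ε = 1 ∨ ε = -1) ∧
      pauliKron F g * pauliKron F h = ε • pauliKron F (g + h) := by
  induction q with
  | zero => exact ⟨1, .inl rfl, by simp [pauliKron]⟩
  | succ q ih =>
    obtain ⟨ε₁, hε₁, hinit⟩ := ih (fun i => g i.castSucc) (fun i => h i.castSucc)
    obtain ⟨ε₂, hε₂, hlast⟩ := sigmaP_mul_sigmaP F (g (Fin.last q)) (h (Fin.last q))
    refine ⟨ε₁ * ε₂, mul_eq_one_or_eq_neg_one hε₁ hε₂, ?_⟩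
    rw [pauliKron_succ, pauliKron_succ, pauliKron_succ,
      reindex_kronecker_mul_reindex_kronecker, hinit, hlast, smul_kronecker, kronecker_smul,
      smul_smul, reindex_apply, reindex_apply, submatrix_smul]
    rfl

end

theorem pauliKron_mul_general (F : Type*) [Field F] (q : ℕ) :
    (∀ g h : Fin q → ZMod 2 × ZMod 2, ∃ ε : F, (ε = 1 ∨ ε = -1) ∧
      pauliKron F g * pauliKron F h = ε • pauliKron F (g + h)) ∧
    ∀ g h : Fin q → ZMod 2 × ZMod 2,
      ∀ x ∈ Submodule.span F {pauliKron F g},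
        ∀ y ∈ Submodule.span F {pauliKron F h},
          x * y ∈ Submodule.span F {pauliKron F (g + h)} := by
  refine ⟨pauliKron_mul_pauliKron F, fun g h x hx y hy => ?_⟩
  obtain ⟨ε, -, hgh⟩ := pauliKron_mul_pauliKron F g h
  exact mul_mem_span_singleton_of_mul_eq_smul hgh hx hy

/-- The product of two homogeneous basis matrices `c_g · c_h` equals `± c_{g+h}`;
consequently the spans of the `c_g` define a `(ZMod 2 × ZMod 2)^q`-grading on
`M_{2^q}(F)`. -/
theorem pauliKron_mul (F : Type*) [Field F] [CharZero F] (q : ℕ) (hq : 1 ≤ q) :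
    (∀ g h : Fin q → ZMod 2 × ZMod 2, ∃ ε : F, (ε = 1 ∨ ε = -1) ∧
      pauliKron F g * pauliKron F h = ε • pauliKron F (g + h)) ∧
    ∀ g h : Fin q → ZMod 2 × ZMod 2,
      ∀ x ∈ Submodule.span F {pauliKron F g},
        ∀ y ∈ Submodule.span F {pauliKron F h},
          x * y ∈ Submodule.span F {pauliKron F (g + h)} :=
  pauliKron_mul_general F q
end

section
/- Let F be a field of characteristic 0 and q ≥ 1. For every g : Fin q → ZMod 2 × ZMod 2 with g ≠ 0 one has trace(c_g) = 0, and the subspace of traceless 2^q × 2^q matrices (the Lie algebra sl_{2^q}(F)) equals the linear span of {c_g : g ≠ 0}; i.e., sl_{2^q}(F) is a homogeneous subspace of the grading. -/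
open Matrix

/-!
The four matrices `σ_u` span `M₂(F)` once `2 ≠ 0`, and Kronecker products of spanning families
span, so the `c_g` span `M_{2^q}(F)`. The trace is multiplicative under Kronecker products, with
`tr σ₀ = 2` and the other `σ_u` traceless; hence `c_0 = 1` has trace `2^q ≠ 0` while every
other `c_g` is traceless. A spanning family with exactly one member outside the kernel of a linear
functional spans that kernel once this member is removed.
-/
theorem Submodule.span_image_compl_singleton_eq_ker {K V ι : Type*} [DivisionRing K]
    [AddCommGroup V] [Module K V] {f : V →ₗ[K] K} {v : ι → V}
    (hv : Submodule.span K (Set.range v) = ⊤) {i₀ : ι} (h₀ : f (v i₀) ≠ 0)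
    (hf : ∀ i ≠ i₀, f (v i) = 0) :
    Submodule.span K (v '' {i₀}ᶜ) = LinearMap.ker f := by
  have hle : Submodule.span K (v '' {i₀}ᶜ) ≤ LinearMap.ker f := by
    rw [Submodule.span_le]
    rintro _ ⟨i, hi, rfl⟩
    exact hf i hi
  refine le_antisymm hle fun x hx => ?_
  have hx' : x ∈ Submodule.span K (insert (v i₀) (v '' {i₀}ᶜ)) := by
    rw [Set.insert_image_compl_eq_range, hv]
    trivial
  obtain ⟨a, z, hz, rfl⟩ := Submodule.mem_span_insert.1 hx'
  have ha : a * f (v i₀) = 0 := by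
    simpa [LinearMap.mem_ker.1 (hle hz)] using LinearMap.mem_ker.1 hx
  rwa [(mul_eq_zero.1 ha).resolve_right h₀, zero_smul, zero_add]

open scoped Kronecker

namespace Matrix

variable {R l m n p : Type*}

theorem trace_reindex [Fintype m] [Fintype n] [AddCommMonoid R] (e : m ≃ n)
    (A : Matrix m m R) : trace (reindex e e A) = trace A :=
  e.symm.sum_comp fun i => A i i

theorem span_image2_kronecker_eq_top [CommSemiring R]
    [Fintype l] [Fintype m] [Fintype n] [Fintype p]
    [DecidableEq l] [DecidableEq m] [DecidableEq n] [DecidableEq p]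
    {s : Set (Matrix l m R)} {t : Set (Matrix n p R)}
    (hs : Submodule.span R s = ⊤) (ht : Submodule.span R t = ⊤) :
    Submodule.span R (Set.image2 (· ⊗ₖ ·) s t) = ⊤ := by
  change Submodule.span R (Set.image2 (fun A B => kroneckerBilinear (R := R) A B) s t) = ⊤
  rw [← Submodule.map₂_span_span, hs, ht, eq_top_iff]
  rintro M -
  rw [matrix_eq_sum_single M]
  refine Submodule.sum_mem _ fun ⟨a, i⟩ _ => Submodule.sum_mem _ fun ⟨b, j⟩ _ => ?_
  rw [← mul_one (M (a, i) (b, j)), ← single_kronecker_single]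
  exact Submodule.apply_mem_map₂ _ Submodule.mem_top Submodule.mem_top

end Matrix

section Pauli

variable (F : Type*) [Field F]

theorem sigmaP_zero : sigmaP F 0 = 1 :=
  (if_pos rfl).trans one_fin_two.symm

theorem trace_sigmaP_of_ne_zero {u : ZMod 2 × ZMod 2} (hu : u ≠ 0) : trace (sigmaP F u) = 0 := by
  obtain ⟨a, b⟩ := u
  fin_cases a <;> fin_cases b <;> simp +decide [sigmaP, trace_fin_two] at hu ⊢

theorem span_range_sigmaP [NeZero (2 : F)] : Submodule.span F (Set.range (sigmaP F)) = ⊤ := by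
  rw [eq_top_iff]
  rintro A -
  have hA : A =
      ((A 0 0 + A 1 1) / 2) • sigmaP F (0, 0) + ((A 0 0 - A 1 1) / 2) • sigmaP F (1, 0) +
        ((A 0 1 + A 1 0) / 2) • sigmaP F (0, 1) + ((A 0 1 - A 1 0) / 2) • sigmaP F (1, 1) := by
    ext i j
    fin_cases i <;> fin_cases j <;> simp [sigmaP] <;> field_simp <;> ring
  rw [hA]
  refine add_mem (add_mem (add_mem ?_ ?_) ?_) ?_ <;>
    exact Submodule.smul_mem _ _ (Submodule.subset_span ⟨_, rfl⟩)

theorem trace_pauliKron : ∀ {q : ℕ} (g : Fin q → ZMod 2 × ZMod 2),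
    trace (pauliKron F g) = ∏ i, trace (sigmaP F (g i))
  | 0, g => by simp [pauliKron]
  | q + 1, g => by
    rw [pauliKron, trace_reindex, trace_kronecker, trace_pauliKron,
      Fin.prod_univ_castSucc]

theorem trace_pauliKron_zero {q : ℕ} :
    trace (pauliKron F (0 : Fin q → ZMod 2 × ZMod 2)) = 2 ^ q := by
  simp [trace_pauliKron, sigmaP_zero]

theorem trace_pauliKron_of_ne_zero {q : ℕ} {g : Fin q → ZMod 2 × ZMod 2} (hg : g ≠ 0) :
    trace (pauliKron F g) = 0 := by
  obtain ⟨i, hi⟩ := Function.ne_iff.1 hg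
  rw [trace_pauliKron]
  exact Finset.prod_eq_zero (Finset.mem_univ i) (trace_sigmaP_of_ne_zero F hi)

theorem pauliKron_snoc {q : ℕ} (g : Fin q → ZMod 2 × ZMod 2) (u : ZMod 2 × ZMod 2) :
    pauliKron F (Fin.snoc g u : Fin (q + 1) → ZMod 2 × ZMod 2) =
      reindex (finProdFinEquiv.trans (finCongr (pow_succ 2 q).symm))
        (finProdFinEquiv.trans (finCongr (pow_succ 2 q).symm))
        (pauliKron F g ⊗ₖ sigmaP F u) := by
  simp [pauliKron]

theorem span_range_pauliKron [NeZero (2 : F)] :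
    ∀ q : ℕ, Submodule.span F (Set.range (pauliKron F (q := q))) = ⊤
  | 0 => by
    refine eq_top_iff.2 fun A _ => ?_
    have hA : A = A 0 0 • pauliKron F (0 : Fin 0 → ZMod 2 × ZMod 2) := by
      ext i j
      fin_cases i; fin_cases j
      simp [pauliKron]
    rw [hA]
    exact Submodule.smul_mem _ _ (Submodule.subset_span ⟨_, rfl⟩)
  | q + 1 => by
    set e := finProdFinEquiv.trans (finCongr (pow_succ 2 q).symm)
    have hsub : reindexLinearEquiv F F e e ''
        Set.image2 (· ⊗ₖ ·) (Set.range (pauliKron F (q := q))) (Set.range (sigmaP F)) ⊆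
          Set.range (pauliKron F (q := q + 1)) := by
      rintro _ ⟨_, ⟨_, ⟨g, rfl⟩, _, ⟨u, rfl⟩, rfl⟩, rfl⟩
      exact ⟨Fin.snoc g u, pauliKron_snoc F g u⟩
    refine top_unique (le_trans ?_ (Submodule.span_mono hsub))
    rw [← LinearEquiv.coe_coe, Submodule.span_image,
      span_image2_kronecker_eq_top (span_range_pauliKron q) (span_range_sigmaP F),
      Submodule.map_top, LinearEquiv.range]

end Pauli

theorem pauliKron_sl_general (F : Type*) [Field F] [CharZero F] (q : ℕ) :
    (∀ g : Fin q → ZMod 2 × ZMod 2, g ≠ 0 → Matrix.trace (pauliKron F g) = 0) ∧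
    Submodule.span F (pauliKron F '' {g : Fin q → ZMod 2 × ZMod 2 | g ≠ 0}) =
      LinearMap.ker (Matrix.traceLinearMap (Fin (2 ^ q)) F F) := by
  refine ⟨fun g hg => trace_pauliKron_of_ne_zero F hg,
    Submodule.span_image_compl_singleton_eq_ker (span_range_pauliKron F q) ?_
      fun g hg => trace_pauliKron_of_ne_zero F hg⟩
  rw [traceLinearMap_apply, trace_pauliKron_zero]
  exact pow_ne_zero q two_ne_zero

/-- For `g ≠ 0` the matrix `c_g` is traceless, and the traceless matrices
`sl_{2^q}(F)` are exactly the span of the `c_g` with `g ≠ 0`: the Lie algebra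
`sl_{2^q}` is homogeneous in the Pauli grading. -/
theorem pauliKron_sl (F : Type*) [Field F] [CharZero F] (q : ℕ) (hq : 1 ≤ q) :
    (∀ g : Fin q → ZMod 2 × ZMod 2, g ≠ 0 → Matrix.trace (pauliKron F g) = 0) ∧
    Submodule.span F (pauliKron F '' {g : Fin q → ZMod 2 × ZMod 2 | g ≠ 0}) =
      LinearMap.ker (Matrix.traceLinearMap (Fin (2 ^ q)) F F) :=
  pauliKron_sl_general F q
end

section
/- Let d ≥ 1 and let n₁, …, n_d be nonnegative integers with sum n ≥ 1. Then, with the convention 0^0 = 1, one has n^(n−d) / (n₁^{n₁} ⋯ n_d^{n_d}) ≤ n! / (n₁! ⋯ n_d!) ≤ n^(n+1) / (n₁^{n₁} ⋯ n_d^{n_d}); equivalently, (1/n^d)·Φ(n; n₁,…,n_d)^n ≤ multinomial(n₁,…,n_d) ≤ n·Φ(n; n₁,…,n_d)^n, where Φ(n; n₁,…,n_d) = ∏_{i=1}^d (n_i/n)^{−n_i/n} (real powers, with 0^0 = 1). -/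
/-!
By the multinomial theorem, `n ^ n = (n₁ + ⋯ + n_d) ^ n` is the sum over all compositions
`k` of `n` of `multinomial k * ∏ nᵢ ^ kᵢ`. The term `k = (n₁, …, n_d)` alone gives the upper
bound. It is also the largest term, because `k ↦ m ^ k / k!` is maximal at `k = m`; and only
compositions supported on the `d' ≤ min d n` indices with `nᵢ ≠ 0` contribute, of which there
are `multichoose d' n ≤ n ^ d'`. This gives the lower bound. The `Φ` form is the same
statement, since `Φ ^ n = n ^ n / ∏ nᵢ ^ nᵢ`.
-/

open Real Finset Nat

theorem Finset.card_piAntidiag_nat {ι : Type*} [DecidableEq ι] (s : Finset ι) (n : ℕ) :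
    #(piAntidiag s n) = (#s).multichoose n := by
  rw [← card_finsuppAntidiag_nat_eq_multichoose, finsuppAntidiag, card_map, card_attach]

namespace Nat

theorem pow_mul_factorial_le_pow_self_mul_factorial (n k : ℕ) : n ^ k * n ! ≤ n ^ n * k ! := by
  rcases le_total k n with hkn | hnk
  · have hdesc : k ! * n.descFactorial (n - k) = n ! := by
      simpa [Nat.sub_sub_self hkn] using factorial_mul_descFactorial (Nat.sub_le n k)
    calc n ^ k * n ! = k ! * (n ^ k * n.descFactorial (n - k)) := by rw [← hdesc]; ring
      _ ≤ k ! * (n ^ k * n ^ (n - k)) := by gcongr; exact descFactorial_le_pow n (n - k)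
      _ = n ^ n * k ! := by rw [← pow_add, Nat.add_sub_cancel' hkn, mul_comm]
  · calc n ^ k * n ! = n ^ n * (n ! * n ^ (k - n)) := by
          rw [mul_comm (n !), ← mul_assoc, ← pow_add, Nat.add_sub_cancel' hnk]
      _ ≤ n ^ n * k ! := by gcongr; exact factorial_mul_pow_sub_le_factorial hnk

theorem multichoose_le_pow {m n : ℕ} (hmn : m ≤ n) : multichoose m n ≤ n ^ m := by
  obtain _ | m := m
  · obtain _ | n := n <;> simp [multichoose_zero_succ]
  have hchoose : m ! * (n + m).choose m ≤ m ! * ((m + 1) * n ^ m) :=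
    calc m ! * (n + m).choose m = (n + m).descFactorial m :=
          (descFactorial_eq_factorial_mul_choose _ _).symm
      _ ≤ (2 * n) ^ m := (descFactorial_le_pow _ _).trans (Nat.pow_le_pow_left (by omega) _)
      _ = 1 ! * 2 ^ m * n ^ m := by rw [mul_pow, factorial_one, one_mul]
      _ ≤ (1 + m) ! * n ^ m := by gcongr; exact factorial_mul_pow_le_factorial
      _ = m ! * ((m + 1) * n ^ m) := by rw [add_comm, factorial_succ]; ring
  calc multichoose (m + 1) n = (n + m).choose m := by
        rw [multichoose_eq, show m + 1 + n - 1 = n + m by omega, choose_symm_add]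
    _ ≤ (m + 1) * n ^ m := Nat.le_of_mul_le_mul_left hchoose (factorial_pos m)
    _ ≤ n * n ^ m := Nat.mul_le_mul_right _ hmn
    _ = n ^ (m + 1) := by rw [pow_succ, mul_comm]

variable {ι : Type*} (s : Finset ι) (f : ι → ℕ)

theorem multinomial_mul_prod_pow_le {k : ι → ℕ} (hk : ∑ i ∈ s, k i = ∑ i ∈ s, f i) :
    multinomial s k * ∏ i ∈ s, f i ^ k i ≤ multinomial s f * ∏ i ∈ s, f i ^ f i := by
  have hpos : 0 < (∏ i ∈ s, (k i)!) * ∏ i ∈ s, (f i)! := by positivity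
  refine Nat.le_of_mul_le_mul_right ?_ hpos
  calc (multinomial s k * ∏ i ∈ s, f i ^ k i) * ((∏ i ∈ s, (k i)!) * ∏ i ∈ s, (f i)!)
      = (∏ i ∈ s, (k i)!) * multinomial s k * ∏ i ∈ s, f i ^ k i * (f i)! := by
        rw [prod_mul_distrib]; ring
    _ ≤ (∏ i ∈ s, (f i)!) * multinomial s f * ∏ i ∈ s, f i ^ f i * (k i)! := by
        rw [multinomial_spec, multinomial_spec, hk]
        exact Nat.mul_le_mul_left _ <| prod_le_prod' fun i _ =>
          pow_mul_factorial_le_pow_self_mul_factorial (f i) (k i)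
    _ = (multinomial s f * ∏ i ∈ s, f i ^ f i) * ((∏ i ∈ s, (k i)!) * ∏ i ∈ s, (f i)!) := by
        rw [prod_mul_distrib]; ring

theorem multinomial_univ_mul_prod_pow_le_pow_sum [Fintype ι] [DecidableEq ι] :
    multinomial univ f * ∏ i, f i ^ f i ≤ (∑ i, f i) ^ ∑ i, f i := by
  simp only [sum_pow_eq_sum_piAntidiag, Nat.cast_id]
  exact single_le_sum (f := fun k => multinomial univ k * ∏ i, f i ^ k i)
    (fun _ _ => Nat.zero_le _) (by simp [mem_piAntidiag])

theorem pow_sum_le_pow_card_mul_multinomial_mul_prod_pow_of_ne_zero [DecidableEq ι]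
    (hf : ∀ i ∈ s, f i ≠ 0) :
    (∑ i ∈ s, f i) ^ ∑ i ∈ s, f i ≤
      (∑ i ∈ s, f i) ^ #s * (multinomial s f * ∏ i ∈ s, f i ^ f i) := by
  set n := ∑ i ∈ s, f i
  have hcard : #s ≤ n := by
    simpa using card_nsmul_le_sum s f 1 fun i hi => Nat.one_le_iff_ne_zero.2 (hf i hi)
  calc (∑ i ∈ s, f i) ^ n = ∑ k ∈ piAntidiag s n, multinomial s k * ∏ i ∈ s, f i ^ k i := by
        simp only [sum_pow_eq_sum_piAntidiag, Nat.cast_id]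
    _ ≤ ∑ _k ∈ piAntidiag s n, multinomial s f * ∏ i ∈ s, f i ^ f i :=
        sum_le_sum fun k hk => multinomial_mul_prod_pow_le s f (mem_piAntidiag.1 hk).1
    _ = multichoose #s n * (multinomial s f * ∏ i ∈ s, f i ^ f i) := by
        rw [sum_const, smul_eq_mul, card_piAntidiag_nat]
    _ ≤ n ^ #s * (multinomial s f * ∏ i ∈ s, f i ^ f i) := by
        gcongr; exact multichoose_le_pow hcard

theorem pow_sum_le_pow_card_mul_multinomial_mul_prod_pow [DecidableEq ι]
    (hn : ∑ i ∈ s, f i ≠ 0) :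
    (∑ i ∈ s, f i) ^ ∑ i ∈ s, f i ≤
      (∑ i ∈ s, f i) ^ #s * (multinomial s f * ∏ i ∈ s, f i ^ f i) := by
  set t := s.filter (f · ≠ 0)
  have hsum : ∑ i ∈ t, f i = ∑ i ∈ s, f i := sum_filter_ne_zero s
  have hmult : multinomial t f = multinomial s f :=
    multinomial_congr_of_sdiff (filter_subset _ s) (by simp +contextual [t]) fun _ _ => rfl
  have hprod : ∏ i ∈ t, f i ^ f i = ∏ i ∈ s, f i ^ f i :=
    prod_filter_of_ne fun i _ h hi => h (by rw [hi, pow_zero])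
  calc (∑ i ∈ s, f i) ^ ∑ i ∈ s, f i
      ≤ (∑ i ∈ s, f i) ^ #t * (multinomial s f * ∏ i ∈ s, f i ^ f i) := by
        simpa only [hsum, hmult, hprod] using
          pow_sum_le_pow_card_mul_multinomial_mul_prod_pow_of_ne_zero t f (by simp [t])
    _ ≤ (∑ i ∈ s, f i) ^ #s * (multinomial s f * ∏ i ∈ s, f i ^ f i) := by
        gcongr
        · omega
        · exact filter_subset _ s

end Nat

theorem Real.prod_div_rpow_neg_div_rpow {ι : Type*} (s : Finset ι) {x : ι → ℝ}
    (hx : ∀ i ∈ s, 0 ≤ x i) {t : ℝ} (ht : 0 < t) (hsum : ∑ i ∈ s, x i = t) :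
    (∏ i ∈ s, (x i / t) ^ (-(x i / t))) ^ t = t ^ t / ∏ i ∈ s, x i ^ x i := by
  have hterm : ∀ i ∈ s, ((x i / t) ^ (-(x i / t))) ^ t = t ^ x i / x i ^ x i := by
    intro i hi
    rw [← rpow_mul (div_nonneg (hx i hi) ht.le), neg_mul, div_mul_cancel₀ _ ht.ne',
      rpow_neg (div_nonneg (hx i hi) ht.le), div_rpow (hx i hi) ht.le, inv_div]
  rw [← finsetProd_rpow _ _ fun i hi => rpow_nonneg (div_nonneg (hx i hi) ht.le) _,
    prod_congr rfl hterm, prod_div_distrib, ← rpow_sum_of_pos ht, hsum]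

theorem multinomial_stirling_bounds_general (d : ℕ) (f : Fin d → ℕ)
    (hn : 1 ≤ ∑ i, f i) :
    ((∑ i, f i : ℕ) : ℝ) ^ (((∑ i, f i : ℕ) : ℝ) - (d : ℝ)) /
        ∏ i, ((f i : ℝ) ^ (f i : ℝ)) ≤
      (Nat.multinomial Finset.univ f : ℝ) ∧
    (Nat.multinomial Finset.univ f : ℝ) ≤
      ((∑ i, f i : ℕ) : ℝ) ^ (((∑ i, f i : ℕ) : ℝ) + 1) /
        ∏ i, ((f i : ℝ) ^ (f i : ℝ)) ∧
    (1 / ((∑ i, f i : ℕ) : ℝ) ^ d) *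
        (∏ i, ((f i : ℝ) / ((∑ i, f i : ℕ) : ℝ)) ^
          (-((f i : ℝ) / ((∑ i, f i : ℕ) : ℝ)))) ^ ((∑ i, f i : ℕ) : ℝ) ≤
      (Nat.multinomial Finset.univ f : ℝ) ∧
    (Nat.multinomial Finset.univ f : ℝ) ≤
      ((∑ i, f i : ℕ) : ℝ) *
        (∏ i, ((f i : ℝ) / ((∑ i, f i : ℕ) : ℝ)) ^
          (-((f i : ℝ) / ((∑ i, f i : ℕ) : ℝ)))) ^ ((∑ i, f i : ℕ) : ℝ) := by
  set n := ∑ i, f i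
  set P := ∏ i, (f i : ℝ) ^ (f i : ℝ)
  have hn₀ : (0 : ℝ) < n := by exact_mod_cast hn
  have hP : P = ((∏ i, f i ^ f i : ℕ) : ℝ) := by
    push_cast; simp only [P, rpow_natCast]
  have hP₀ : 0 < P := by
    rw [hP]; exact_mod_cast prod_pos fun i _ => Nat.pow_self_pos
  have hupper : (multinomial univ f : ℝ) * P ≤ (n : ℝ) ^ n := by
    rw [hP]; exact_mod_cast multinomial_univ_mul_prod_pow_le_pow_sum f
  have hlower : (n : ℝ) ^ n ≤ (n : ℝ) ^ d * ((multinomial univ f : ℝ) * P) := by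
    rw [hP]
    exact_mod_cast Finset.card_fin d ▸
      pow_sum_le_pow_card_mul_multinomial_mul_prod_pow univ f (by omega)
  have hΦ := prod_div_rpow_neg_div_rpow univ (x := fun i => (f i : ℝ))
    (fun _ _ => by positivity) hn₀ (by simp only [n, Nat.cast_sum])
  rw [hΦ, rpow_sub hn₀, rpow_add_one hn₀.ne', rpow_natCast, rpow_natCast]
  have hlower' : (n : ℝ) ^ n / (n : ℝ) ^ d / P ≤ multinomial univ f := by
    rw [div_le_iff₀ hP₀, div_le_iff₀ (by positivity)]; linarith
  have hupper' : (multinomial univ f : ℝ) ≤ (n : ℝ) ^ n * n / P := by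
    rw [le_div_iff₀ hP₀]
    exact hupper.trans (le_mul_of_one_le_right (by positivity) (by exact_mod_cast hn))
  refine ⟨hlower', hupper', ?_, ?_⟩
  · convert hlower' using 1; ring
  · convert hupper' using 1; ring

/-- Stirling-type bounds for the multinomial coefficient: with `n = n₁ + ⋯ + n_d`,
`n^(n−d)/(n₁^{n₁}⋯n_d^{n_d}) ≤ n!/(n₁!⋯n_d!) ≤ n^(n+1)/(n₁^{n₁}⋯n_d^{n_d})`;
equivalently, `(1/n^d)·Φ^n ≤ multinomial ≤ n·Φ^n` where
`Φ = ∏ᵢ (nᵢ/n)^(−nᵢ/n)` (real powers, `0^0 = 1`). -/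
theorem multinomial_stirling_bounds (d : ℕ) (hd : 1 ≤ d) (f : Fin d → ℕ)
    (hn : 1 ≤ ∑ i, f i) :
    ((∑ i, f i : ℕ) : ℝ) ^ (((∑ i, f i : ℕ) : ℝ) - (d : ℝ)) /
        ∏ i, ((f i : ℝ) ^ (f i : ℝ)) ≤
      (Nat.multinomial Finset.univ f : ℝ) ∧
    (Nat.multinomial Finset.univ f : ℝ) ≤
      ((∑ i, f i : ℕ) : ℝ) ^ (((∑ i, f i : ℕ) : ℝ) + 1) /
        ∏ i, ((f i : ℝ) ^ (f i : ℝ)) ∧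
    (1 / ((∑ i, f i : ℕ) : ℝ) ^ d) *
        (∏ i, ((f i : ℝ) / ((∑ i, f i : ℕ) : ℝ)) ^
          (-((f i : ℝ) / ((∑ i, f i : ℕ) : ℝ)))) ^ ((∑ i, f i : ℕ) : ℝ) ≤
      (Nat.multinomial Finset.univ f : ℝ) ∧
    (Nat.multinomial Finset.univ f : ℝ) ≤
      ((∑ i, f i : ℕ) : ℝ) *
        (∏ i, ((f i : ℝ) / ((∑ i, f i : ℕ) : ℝ)) ^
          (-((f i : ℝ) / ((∑ i, f i : ℕ) : ℝ)))) ^ ((∑ i, f i : ℕ) : ℝ) :=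
  multinomial_stirling_bounds_general d f hn
end

section
/- Let t ≥ 2 be an integer and set a = t(t+1)/2, b = t(t−1)/2, c = t² − 1. For all real numbers x, y, z ≥ 0 satisfying a·x = b·y and a·x + b·y + c·z = 1, one has (with the convention 0^0 = 1) x^{−a·x} · y^{−b·y} · z^{−c·z} ≤ t² − 1 + t·√(t² − 1). -/
open Real

/-!
Put `s = √(ab)`, `α = s / a` and `β = s / b`, so that `αβ = 1` and hence `α^(ax) β^(by) = 1`
when `ax = by`. Multiplying by this factor rewrites the product as
`(α/x)^(ax) (β/y)^(by) (1/z)^(cz)`, a weighted geometric mean with weights `ax + by + cz = 1`,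
and the weighted AM–GM inequality bounds it by `aα + bβ + c = 2√(ab) + c`.
For the given `a, b, c` one has `ab = (t/2)² (t² − 1)`.
-/

lemma Real.rpow_neg_eq_rpow_neg_mul_div_rpow {x l : ℝ} (hx : 0 ≤ x) (hl : 0 < l) (w : ℝ) :
    x ^ (-w) = l ^ (-w) * (l / x) ^ w := by
  rw [Real.div_rpow hl.le hx, Real.rpow_neg hx, Real.rpow_neg hl.le, div_eq_mul_inv,
    ← mul_assoc, inv_mul_cancel₀ (Real.rpow_pos_of_pos hl w).ne', one_mul]

lemma mul_mul_div_le {a l : ℝ} (hal : 0 ≤ a * l) (x : ℝ) : a * x * (l / x) ≤ a * l := by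
  calc a * x * (l / x) = a * l * (x / x) := by ring
    _ ≤ a * l := mul_le_of_le_one_right hal (div_self_le_one x)

theorem rpow_neg_mul_prod_le_of_balanced {a b c x y z : ℝ} (ha : 0 < a) (hb : 0 < b) (hc : 0 ≤ c)
    (hx : 0 ≤ x) (hy : 0 ≤ y) (hz : 0 ≤ z) (hxy : a * x = b * y)
    (hsum : a * x + b * y + c * z = 1) :
    x ^ (-(a * x)) * y ^ (-(b * y)) * z ^ (-(c * z)) ≤ 2 * √(a * b) + c := by
  set s := √(a * b)
  have hs : 0 < s := Real.sqrt_pos.2 (mul_pos ha hb)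
  have hα : 0 < s / a := div_pos hs ha
  have hβ : 0 < s / b := div_pos hs hb
  have hαβ : s / a * (s / b) = 1 := by
    rw [div_mul_div_comm, ← sq, Real.sq_sqrt (mul_pos ha hb).le, div_self (mul_pos ha hb).ne']
  have hbalance : (s / a) ^ (-(a * x)) * (s / b) ^ (-(b * y)) = 1 := by
    rw [← hxy, ← Real.mul_rpow hα.le hβ.le, hαβ, Real.one_rpow]
  have hrewrite : x ^ (-(a * x)) * y ^ (-(b * y)) * z ^ (-(c * z)) =
      (s / a / x) ^ (a * x) * (s / b / y) ^ (b * y) * (1 / z) ^ (c * z) := by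
    rw [Real.rpow_neg_eq_rpow_neg_mul_div_rpow hx hα, Real.rpow_neg_eq_rpow_neg_mul_div_rpow hy hβ,
      Real.rpow_neg_eq_rpow_neg_mul_div_rpow hz one_pos, Real.one_rpow]
    linear_combination ((s / a / x) ^ (a * x) * (s / b / y) ^ (b * y) * (1 / z) ^ (c * z)) *
      hbalance
  rw [hrewrite]
  calc _ ≤ a * x * (s / a / x) + b * y * (s / b / y) + c * z * (1 / z) :=
        Real.geom_mean_le_arith_mean3_weighted (mul_nonneg ha.le hx) (mul_nonneg hb.le hy)
          (mul_nonneg hc hz) (by positivity) (by positivity) (by positivity) hsum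
    _ ≤ a * (s / a) + b * (s / b) + c * 1 := by
        gcongr ?_ + ?_ + ?_
        · exact mul_mul_div_le (mul_pos ha hα).le x
        · exact mul_mul_div_le (mul_pos hb hβ).le y
        · exact mul_mul_div_le (by rwa [mul_one]) z
    _ = 2 * s + c := by field_simp; ring

/-- With `a = t(t+1)/2`, `b = t(t−1)/2`, `c = t²−1`, any nonnegative reals `x, y, z`
with `a·x = b·y` and `a·x + b·y + c·z = 1` satisfy
`x^(−a·x)·y^(−b·y)·z^(−c·z) ≤ t² − 1 + t·√(t² − 1)` (real powers, `0^0 = 1`). -/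
theorem Phi_max_bound (t : ℕ) (ht : 2 ≤ t) (a b c : ℝ)
    (ha : a = t * (t + 1) / 2) (hb : b = t * (t - 1) / 2) (hc : c = (t : ℝ) ^ 2 - 1)
    (x y z : ℝ) (hx : 0 ≤ x) (hy : 0 ≤ y) (hz : 0 ≤ z)
    (hxy : a * x = b * y) (hsum : a * x + b * y + c * z = 1) :
    x ^ (-(a * x)) * y ^ (-(b * y)) * z ^ (-(c * z)) ≤
      (t : ℝ) ^ 2 - 1 + t * Real.sqrt ((t : ℝ) ^ 2 - 1) := by
  have ht2 : (2 : ℝ) ≤ t := by exact_mod_cast ht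
  have hsqrt : √(a * b) = t / 2 * √((t : ℝ) ^ 2 - 1) := by
    rw [show a * b = (t / 2) ^ 2 * ((t : ℝ) ^ 2 - 1) by rw [ha, hb]; ring,
      Real.sqrt_mul (sq_nonneg _), Real.sqrt_sq (by positivity)]
  calc _ ≤ 2 * √(a * b) + c :=
        rpow_neg_mul_prod_le_of_balanced (by rw [ha]; positivity) (by rw [hb]; nlinarith)
          (by rw [hc]; nlinarith) hx hy hz hxy hsum
    _ = _ := by rw [hsqrt, hc]; ring
end

section
/- Let t ≥ 2 be an integer, c = t² − 1, and define g : ℝ → ℝ by g(z) = c·z·ln(z) + (1 − c·z)·ln(1 − c·z) − (1/2)·(1 − c·z)·ln(c·t²). Set z₀ = (t² − 1 + t·√(t² − 1))⁻¹. Then z₀ ∈ (0, 1/c); for every z in the open interval (0, 1/c) the derivative of g vanishes at z if and only if z = z₀; the second derivative of g at z₀ is positive (so g has a local minimum at z₀); and g(z₀) = −ln(t² − 1 + t·√(t² − 1)). -/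
open Real Set

/-!
Writing `A = c + exp (K / 2)`, the derivative of
`g z = c z log z + (1 - c z) log (1 - c z) - ½ (1 - c z) K` on `(0, 1/c)` is
`c (log z - log (1 - c z) + K / 2)`, which is strictly increasing and vanishes exactly at
`z = A⁻¹` (where `1 - c z = exp (K / 2) / A`); there `g = -log A`. For `K = log (c t²)` one has
`exp (K / 2) = t √c`.
-/

noncomputable def entropyExponent (c K z : ℝ) : ℝ :=
  c * z * log z + (1 - c * z) * log (1 - c * z) - (1 / 2) * (1 - c * z) * K

namespace EntropyExponent

variable {c z : ℝ} (K : ℝ)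

lemma one_sub_mul_pos (hc : 0 < c) (hz : z ∈ Ioo 0 (1 / c)) : 0 < 1 - c * z := by
  have := (lt_div_iff₀' hc).1 hz.2
  linarith

lemma hasDerivAt (hc : 0 < c) (hz : z ∈ Ioo 0 (1 / c)) :
    HasDerivAt (entropyExponent c K) (c * (log z - log (1 - c * z) + K / 2)) z := by
  have hz0 : z ≠ 0 := hz.1.ne'
  have hw0 : 1 - c * z ≠ 0 := (one_sub_mul_pos hc hz).ne'
  have hw : HasDerivAt (fun z : ℝ => 1 - c * z) (-c) z := by
    simpa using ((hasDerivAt_id z).const_mul c).const_sub 1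
  have h := ((((hasDerivAt_id z).const_mul c).mul (hasDerivAt_log hz0)).add
    (hw.mul ((hasDerivAt_log hw0).comp z hw))).sub ((hw.const_mul (1 / 2)).mul_const K)
  refine h.congr_deriv ?_
  rw [id, mul_assoc c z, mul_inv_cancel₀ hz0, mul_inv_cancel_left₀ hw0, Function.comp_apply]
  ring

lemma strictMonoOn_log_sub_log_one_sub (hc : 0 < c) :
    StrictMonoOn (fun z => log z - log (1 - c * z)) (Ioo 0 (1 / c)) := by
  intro x hx y hy hxy
  have hlog_lt : log x < log y := log_lt_log hx.1 hxy
  have hlog_gt : log (1 - c * y) < log (1 - c * x) :=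
    log_lt_log (one_sub_mul_pos hc hy) (by nlinarith)
  simp only
  linarith

lemma inv_add_exp_mem_Ioo (hc : 0 < c) : (c + exp (K / 2))⁻¹ ∈ Ioo 0 (1 / c) :=
  ⟨by positivity, by rw [one_div]; exact inv_strictAnti₀ hc (by linarith [exp_pos (K / 2)])⟩

lemma one_sub_mul_inv_add_exp (hc : 0 < c) :
    1 - c * (c + exp (K / 2))⁻¹ = exp (K / 2) / (c + exp (K / 2)) := by
  have : c + exp (K / 2) ≠ 0 := by positivity
  field_simp
  ring

lemma log_sub_log_one_sub_inv_add_exp (hc : 0 < c) :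
    log (c + exp (K / 2))⁻¹ - log (1 - c * (c + exp (K / 2))⁻¹) = -(K / 2) := by
  have hA : c + exp (K / 2) ≠ 0 := by positivity
  rw [one_sub_mul_inv_add_exp K hc, log_inv, log_div (exp_pos _).ne' hA, log_exp]
  ring

lemma deriv_eq_zero_iff (hc : 0 < c) (hz : z ∈ Ioo 0 (1 / c)) :
    deriv (entropyExponent c K) z = 0 ↔ z = (c + exp (K / 2))⁻¹ := by
  rw [(hasDerivAt K hc hz).deriv, mul_eq_zero, or_iff_right hc.ne', add_eq_zero_iff_eq_neg,
    ← log_sub_log_one_sub_inv_add_exp K hc]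
  exact (strictMonoOn_log_sub_log_one_sub hc).injOn.eq_iff hz (inv_add_exp_mem_Ioo K hc)

lemma hasDerivAt_deriv (hc : 0 < c) (hz : z ∈ Ioo 0 (1 / c)) :
    HasDerivAt (deriv (entropyExponent c K)) (c * (z⁻¹ + c * (1 - c * z)⁻¹)) z := by
  have hw : HasDerivAt (fun z : ℝ => 1 - c * z) (-c) z := by
    simpa using ((hasDerivAt_id z).const_mul c).const_sub 1
  have h := (((hasDerivAt_log hz.1.ne').sub
    ((hasDerivAt_log (one_sub_mul_pos hc hz).ne').comp z hw)).add_const (K / 2)).const_mul c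
  refine (h.congr_deriv (by ring)).congr_of_eventuallyEq ?_
  filter_upwards [isOpen_Ioo.mem_nhds hz] with x hx
  exact (hasDerivAt K hc hx).deriv

lemma deriv_deriv_pos (hc : 0 < c) (hz : z ∈ Ioo 0 (1 / c)) :
    0 < deriv (deriv (entropyExponent c K)) z := by
  have := hz.1
  have := one_sub_mul_pos hc hz
  rw [(hasDerivAt_deriv K hc hz).deriv]
  positivity

lemma apply_inv_add_exp (hc : 0 < c) :
    entropyExponent c K (c + exp (K / 2))⁻¹ = -log (c + exp (K / 2)) := by
  have hA : c + exp (K / 2) ≠ 0 := by positivity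
  rw [entropyExponent, one_sub_mul_inv_add_exp K hc, log_inv,
    log_div (exp_pos _).ne' hA, log_exp]
  field_simp
  ring

end EntropyExponent

lemma exp_half_log_mul_sq {c t : ℝ} (hc : 0 < c) (ht : 0 < t) :
    exp (log (c * t ^ 2) / 2) = t * √c := by
  have : t * √c = √(c * t ^ 2) := by rw [sqrt_mul hc.le, sqrt_sq ht.le, mul_comm]
  rw [this, sqrt_eq_rpow, rpow_def_of_pos (by positivity)]
  ring_nf

/-- Properties of `g(z) = cz·ln z + (1−cz)·ln(1−cz) − ½(1−cz)·ln(c·t²)` with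
`c = t²−1`: `z₀ = (t²−1+t√(t²−1))⁻¹` lies in `(0, 1/c)`, it is the unique critical
point of `g` in `(0, 1/c)`, the second derivative there is positive (so `g` has a
local minimum at `z₀`), and `g(z₀) = −ln(t²−1+t√(t²−1))`. -/
theorem g_critical_point (t : ℕ) (ht : 2 ≤ t) (c : ℝ) (hc : c = (t : ℝ) ^ 2 - 1)
    (g : ℝ → ℝ)
    (hg : g = fun z => c * z * Real.log z + (1 - c * z) * Real.log (1 - c * z) -
      (1 / 2) * (1 - c * z) * Real.log (c * (t : ℝ) ^ 2))
    (z₀ : ℝ) (hz₀ : z₀ = ((t : ℝ) ^ 2 - 1 + t * Real.sqrt ((t : ℝ) ^ 2 - 1))⁻¹) :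
    z₀ ∈ Set.Ioo 0 (1 / c) ∧
    (∀ z ∈ Set.Ioo (0 : ℝ) (1 / c), (deriv g z = 0 ↔ z = z₀)) ∧
    0 < deriv (deriv g) z₀ ∧
    IsLocalMin g z₀ ∧
    g z₀ = -Real.log ((t : ℝ) ^ 2 - 1 + t * Real.sqrt ((t : ℝ) ^ 2 - 1)) := by
  have htR : (2 : ℝ) ≤ t := by exact_mod_cast ht
  have hc0 : 0 < c := by nlinarith
  set K := log (c * (t : ℝ) ^ 2)
  have hA : c + exp (K / 2) = (t : ℝ) ^ 2 - 1 + t * √((t : ℝ) ^ 2 - 1) := by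
    rw [exp_half_log_mul_sq hc0 (by linarith), hc]
  replace hg : g = entropyExponent c K := hg
  rw [← hA] at hz₀ ⊢
  subst hg hz₀
  have hmem := EntropyExponent.inv_add_exp_mem_Ioo K hc0
  have hpos := EntropyExponent.deriv_deriv_pos K hc0 hmem
  refine ⟨hmem, fun z hz => EntropyExponent.deriv_eq_zero_iff K hc0 hz, hpos,
    isLocalMin_of_deriv_deriv_pos hpos ((EntropyExponent.deriv_eq_zero_iff K hc0 hmem).2 rfl)
      (EntropyExponent.hasDerivAt K hc0 hmem).continuousAt,
    EntropyExponent.apply_inv_add_exp K hc0⟩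
end

section
/- Let t ≥ 2 be an integer and set a = t(t+1)/2, b = t(t−1)/2, c = t² − 1, d = a + b + c. Let n₁, …, n_d be nonnegative integers with sum n ≥ 1 satisfying |(n₁ + ⋯ + n_a) − (n_{a+1} + ⋯ + n_{a+b})| ≤ 1. Then the multinomial coefficient satisfies n!/(n₁!⋯n_d!) ≤ (n+1)^{d+1} · (t² − 1 + t·√(t² − 1))^{n+1}. -/
/-!
Weight the three blocks of variables by `u = √b/√a`, `v = √a/√b` and `1`. The multinomial
theorem bounds the coefficient times `u^p v^q` by `S^n`, where `p`, `q` are the sums over the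
first two blocks and `S = a u + b v + c = 2√(ab) + c = t√(t²−1) + t² − 1`. Since `uv = 1` and
`|p − q| ≤ 1`, the weight `u^p v^q` is `1`, `u` or `v`, and its reciprocal is at most `S`.
-/

open Finset Real

theorem Nat.multinomial_mul_prod_pow_le_sum_pow {ι : Type*} [Fintype ι] {x : ι → ℝ}
    (hx : ∀ i, 0 ≤ x i) (f : ι → ℕ) :
    (Nat.multinomial univ f : ℝ) * ∏ i, x i ^ f i ≤ (∑ i, x i) ^ ∑ i, f i := by
  classical
  rw [sum_pow_eq_sum_piAntidiag]
  refine single_le_sum (f := fun k => (Nat.multinomial univ k : ℝ) * ∏ i, x i ^ k i)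
    (fun k _ => ?_) (mem_piAntidiag.2 ⟨rfl, fun i _ => mem_univ i⟩)
  have := prod_nonneg fun i (_ : i ∈ univ) => pow_nonneg (hx i) (k i)
  positivity

theorem pow_mul_pow_eq_one_or_of_mul_eq_one {M : Type*} [CommMonoid M] {u v : M}
    (huv : u * v = 1) {p q : ℕ} (hpq : |(p : ℤ) - q| ≤ 1) :
    u ^ p * v ^ q = 1 ∨ u ^ p * v ^ q = u ∨ u ^ p * v ^ q = v := by
  rw [abs_le] at hpq
  obtain rfl | rfl | rfl : p = q ∨ p = q + 1 ∨ q = p + 1 := by omega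
  · simp [← mul_pow, huv]
  · right; left
    rw [pow_succ, mul_right_comm, ← mul_pow, huv, one_pow, one_mul]
  · right; right
    rw [pow_succ, ← mul_assoc, ← mul_pow, huv, one_pow, one_mul]

theorem multinomial_le_pow_of_balanced {α β γ : Type*} [Fintype α] [Fintype β] [Fintype γ]
    [Nonempty α] [Nonempty β] [Nonempty γ] {u v : ℝ} (hu : 0 < u) (hv : 0 < v)
    (huv : u * v = 1) (f : α ⊕ β ⊕ γ → ℕ)
    (hbal : |(∑ i, (f (Sum.inl i) : ℤ)) - ∑ i, (f (Sum.inr (Sum.inl i)) : ℤ)| ≤ 1) :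
    (Nat.multinomial univ f : ℝ) ≤
      (Fintype.card α * u + Fintype.card β * v + Fintype.card γ) ^ (∑ i, f i + 1) := by
  set S := (Fintype.card α : ℝ) * u + Fintype.card β * v + Fintype.card γ with hS
  set p := ∑ i, f (Sum.inl i)
  set q := ∑ i, f (Sum.inr (Sum.inl i))
  let x : α ⊕ β ⊕ γ → ℝ := Sum.elim (fun _ => u) (Sum.elim (fun _ => v) fun _ => 1)
  have hsum : ∑ i, x i = S := by simp [x, S, Fintype.sum_sum_type, add_assoc]
  have hprod : ∏ i, x i ^ f i = u ^ p * v ^ q := by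
    simp [x, p, q, Fintype.prod_sum_type, prod_pow_eq_pow_sum]
  have hα : (1 : ℝ) ≤ Fintype.card α := by exact_mod_cast Fintype.card_pos
  have hβ : (1 : ℝ) ≤ Fintype.card β := by exact_mod_cast Fintype.card_pos
  have hγ : (1 : ℝ) ≤ Fintype.card γ := by exact_mod_cast Fintype.card_pos
  have hw : 1 ≤ S * (u ^ p * v ^ q) := by
    have hpq : |(p : ℤ) - q| ≤ 1 := by simpa [p, q] using hbal
    rcases pow_mul_pow_eq_one_or_of_mul_eq_one huv hpq with h | h | h <;> rw [h, hS]
    · nlinarith [mul_pos hu hv]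
    · nlinarith [mul_pos hu hu]
    · nlinarith [mul_pos hv hv]
  have hkey := Nat.multinomial_mul_prod_pow_le_sum_pow
    (x := x) (by rintro (i | i | i) <;> simp [x, hu.le, hv.le]) f
  rw [hprod, hsum] at hkey
  calc (Nat.multinomial univ f : ℝ)
      ≤ Nat.multinomial univ f * (S * (u ^ p * v ^ q)) :=
        le_mul_of_one_le_right (Nat.cast_nonneg _) hw
    _ = Nat.multinomial univ f * (u ^ p * v ^ q) * S := by ring
    _ ≤ S ^ (∑ i, f i) * S := by gcongr
    _ = S ^ (∑ i, f i + 1) := (pow_succ S _).symm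

theorem cast_mul_succ_div_two (t : ℕ) : ((t * (t + 1) / 2 : ℕ) : ℝ) = t * (t + 1) / 2 := by
  rw [Nat.cast_div (even_iff_two_dvd.1 (Nat.even_mul_succ_self t)) two_ne_zero]
  push_cast; rfl

theorem cast_mul_pred_div_two {t : ℕ} (ht : 1 ≤ t) :
    ((t * (t - 1) / 2 : ℕ) : ℝ) = t * (t - 1) / 2 := by
  rw [Nat.cast_div (even_iff_two_dvd.1 (Nat.even_mul_pred_self t)) two_ne_zero]
  push_cast [ht]; rfl

theorem two_mul_sqrt_mul_sqrt_triangular {t : ℕ} (ht : 1 ≤ t) :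
    2 * (√((t * (t + 1) / 2 : ℕ) : ℝ) * √((t * (t - 1) / 2 : ℕ) : ℝ)) =
      t * √((t : ℝ) ^ 2 - 1) := by
  rw [cast_mul_succ_div_two, cast_mul_pred_div_two ht, ← sqrt_mul (by positivity),
    show (t : ℝ) * (t + 1) / 2 * (t * (t - 1) / 2) = (t / 2) ^ 2 * (t ^ 2 - 1) by ring,
    sqrt_mul (by positivity), sqrt_sq (by positivity)]
  ring

theorem multinomial_upper_bound_general (t : ℕ) (ht : 2 ≤ t) (a b c d : ℕ)
    (ha : a = t * (t + 1) / 2) (hb : b = t * (t - 1) / 2) (hc : c = t ^ 2 - 1)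
    (f : Fin a ⊕ Fin b ⊕ Fin c → ℕ) (n : ℕ)
    (hn : n = ∑ i, f i)
    (hbal : |(∑ i, (f (Sum.inl i) : ℤ)) - ∑ i, (f (Sum.inr (Sum.inl i)) : ℤ)| ≤ 1) :
    (Nat.multinomial Finset.univ f : ℝ) ≤
      (n + 1 : ℝ) ^ (d + 1) *
        ((t : ℝ) ^ 2 - 1 + t * Real.sqrt ((t : ℝ) ^ 2 - 1)) ^ (n + 1) := by
  have ha1 : 1 ≤ a := by
    have : 2 ≤ t * (t + 1) := Nat.mul_le_mul (by omega : 1 ≤ t) (by omega : 2 ≤ t + 1)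
    omega
  have hb1 : 1 ≤ b := by
    have : 2 ≤ t * (t - 1) := Nat.mul_le_mul ht (by omega : 1 ≤ t - 1)
    omega
  have hc1 : 1 ≤ c := by
    have : 4 ≤ t ^ 2 := by nlinarith
    omega
  have : Nonempty (Fin a) := ⟨⟨0, ha1⟩⟩
  have : Nonempty (Fin b) := ⟨⟨0, hb1⟩⟩
  have : Nonempty (Fin c) := ⟨⟨0, hc1⟩⟩
  have ha0 : (0 : ℝ) < √(a : ℝ) := sqrt_pos.2 (by exact_mod_cast ha1)
  have hb0 : (0 : ℝ) < √(b : ℝ) := sqrt_pos.2 (by exact_mod_cast hb1)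
  have hS : (a : ℝ) * (√b / √a) + b * (√a / √b) + c = t ^ 2 - 1 + t * √((t : ℝ) ^ 2 - 1) := by
    rw [← two_mul_sqrt_mul_sqrt_triangular (by omega), ← ha, ← hb, hc,
      Nat.cast_sub (Nat.one_le_pow _ _ (by omega)), mul_div_assoc', mul_div_assoc',
      mul_comm, mul_div_assoc, div_sqrt, mul_comm (b : ℝ), mul_div_assoc, div_sqrt]
    push_cast; ring
  have hS0 : 0 ≤ (t : ℝ) ^ 2 - 1 + t * √((t : ℝ) ^ 2 - 1) := by
    rw [← hS]; positivity
  have hM := multinomial_le_pow_of_balanced (div_pos hb0 ha0) (div_pos ha0 hb0)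
    (by field_simp) f hbal
  simp only [Fintype.card_fin, hS, ← hn] at hM
  refine hM.trans (le_mul_of_one_le_left (pow_nonneg hS0 _) (one_le_pow₀ ?_))
  linarith [(Nat.cast_nonneg n : (0 : ℝ) ≤ n)]

/-- Upper bound on the graded codimension summands: with `a = t(t+1)/2`,
`b = t(t−1)/2`, `c = t²−1`, `d = a+b+c`, for nonnegative integers `n₁,…,n_d` with sum
`n ≥ 1` such that the first `a` of them and the next `b` of them have sums differing
by at most `1`, the multinomial coefficient is at most
`(n+1)^(d+1)·(t²−1+t√(t²−1))^(n+1)`. -/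
theorem multinomial_upper_bound (t : ℕ) (ht : 2 ≤ t) (a b c d : ℕ)
    (ha : a = t * (t + 1) / 2) (hb : b = t * (t - 1) / 2) (hc : c = t ^ 2 - 1)
    (hd : d = a + b + c) (f : Fin a ⊕ Fin b ⊕ Fin c → ℕ) (n : ℕ)
    (hn : n = ∑ i, f i) (hn1 : 1 ≤ n)
    (hbal : |(∑ i, (f (Sum.inl i) : ℤ)) - ∑ i, (f (Sum.inr (Sum.inl i)) : ℤ)| ≤ 1) :
    (Nat.multinomial Finset.univ f : ℝ) ≤
      (n + 1 : ℝ) ^ (d + 1) *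
        ((t : ℝ) ^ 2 - 1 + t * Real.sqrt ((t : ℝ) ^ 2 - 1)) ^ (n + 1) :=
  multinomial_upper_bound_general t ht a b c d ha hb hc f n hn hbal
end

section
/- Let t ≥ 2 be an integer and set a = t(t+1)/2, b = t(t−1)/2, c = t² − 1, d = a + b + c. For every real ε > 0 there exist infinitely many positive integers n for which there are nonnegative integers n₁, …, n_d with n₁ + ⋯ + n_d = n, with n₁ + ⋯ + n_a = n_{a+1} + ⋯ + n_{a+b}, and such that the multinomial coefficient satisfies n!/(n₁!⋯n_d!) ≥ (t² − 1 + t·√(t² − 1) − ε)^n. -/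
/-
Put `b * u` on each of the first `a` coordinates, `a * u` on each of the next `b` and `2ab * v`
on each of the last `c`, so that the first two blocks have equal sums. Stirling's bounds give
`log (n! / ∏ kᵢ!) = n log n - ∑ kᵢ log kᵢ + O(d log n)`, and the main term is homogeneous of
degree one in `k`. At the irrational ratio `u / v = 2√(ab)` it equals `n log (c + 2√(ab))`
(the logarithms of `b u` and `a u` add up to `2 log (2ab v)`), and `c + 2√(ab)` is exactly
`t² - 1 + t√(t² - 1)`. By continuity a nearby rational ratio still beats `n log β` for any
`β < c + 2√(ab)`, and scaling the vector by `m` makes the `O(d log n)` error negligible.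
Nonpositive `β` are handled by compositions of odd length.
-/

open Real Finset Filter Asymptotics
open scoped Nat

namespace Real

theorem log_factorial_le (k : ℕ) : log k ! ≤ k * log k - k + (1 + log k) := by
  rcases k.eq_zero_or_pos with rfl | hk
  · simp
  have hk' : (0 : ℝ) < k := by exact_mod_cast hk
  have hs : Stirling.stirlingSeq k ≤ exp 1 / √2 := by
    obtain ⟨j, rfl⟩ := Nat.exists_eq_add_of_lt hk
    simpa [Stirling.stirlingSeq_one] using Stirling.stirlingSeq'_antitone (Nat.zero_le j)
  rw [Stirling.stirlingSeq, div_le_div_iff₀ (by positivity) (by positivity),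
    sqrt_mul zero_le_two] at hs
  have hfac : (k ! : ℝ) ≤ exp 1 * √k * (k / exp 1) ^ k :=
    le_of_mul_le_mul_right (by linarith) (by positivity : (0 : ℝ) < √2)
  have hlog := log_le_log (by positivity) hfac
  rw [log_mul (by positivity) (by positivity), log_mul (by positivity) (by positivity),
    log_exp, log_sqrt hk'.le, log_pow, log_div hk'.ne' (by positivity),
    log_exp] at hlog
  linarith [log_nonneg (show (1 : ℝ) ≤ k by exact_mod_cast hk)]

theorem le_log_factorial (n : ℕ) : n * log n - n ≤ log n ! := by
  rcases n.eq_zero_or_pos with rfl | hn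
  · simp
  have h := pow_div_factorial_le_exp (x := (n : ℝ)) n.cast_nonneg n
  rw [div_le_iff₀ (by positivity)] at h
  have := log_le_log (by positivity) h
  rw [log_pow, log_mul (by positivity) (by positivity), log_exp] at this
  linarith

theorem log_natCast_le_log_natCast {m n : ℕ} (h : m ≤ n) : log m ≤ log n := by
  rcases m.eq_zero_or_pos with rfl | hm
  · simp [log_natCast_nonneg]
  · exact log_le_log (by positivity) (by exact_mod_cast h)

theorem log_natCast_mul_le (m n : ℕ) : log (m * n : ℕ) ≤ log m + log n := by
  rcases m.eq_zero_or_pos with rfl | hm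
  · simp [log_natCast_nonneg]
  rcases n.eq_zero_or_pos with rfl | hn
  · simp [log_natCast_nonneg]
  push_cast
  rw [log_mul (by positivity) (by positivity)]

end Real

section multinomialEntropy

variable {ι : Type*} [Fintype ι]

noncomputable def multinomialEntropy (x : ι → ℝ) : ℝ :=
  ∑ i, negMulLog (x i) - negMulLog (∑ i, x i)

theorem continuous_multinomialEntropy : Continuous (multinomialEntropy (ι := ι)) := by
  unfold multinomialEntropy; fun_prop

theorem multinomialEntropy_smul (r : ℝ) (x : ι → ℝ) :
    multinomialEntropy (r • x) = r * multinomialEntropy x := by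
  simp only [multinomialEntropy, Pi.smul_apply, smul_eq_mul, ← mul_sum, negMulLog_mul,
    sum_add_distrib, ← sum_mul]
  ring

theorem multinomialEntropy_sub_le_log_multinomial (f : ι → ℕ) :
    multinomialEntropy (Nat.cast ∘ f) - Fintype.card ι * (1 + log (∑ i, f i : ℕ)) ≤
      log (Nat.multinomial univ f) := by
  have hlog : log (Nat.multinomial univ f) = log (∑ i, f i)! - ∑ i, log (f i)! := by
    have := Nat.multinomial_pos univ f
    rw [eq_sub_iff_add_eq, add_comm, ← log_prod fun i _ => by positivity,
      ← log_mul (by positivity) (by positivity)]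
    exact_mod_cast congrArg (fun m : ℕ => log m) (Nat.multinomial_spec univ f)
  have hfac (i : ι) : log (f i)! ≤ f i * log (f i) - f i + (1 + log (∑ i, f i : ℕ)) := by
    linarith [log_factorial_le (f i),
      log_natCast_le_log_natCast (single_le_sum (fun j _ => Nat.zero_le (f j)) (mem_univ i))]
  have hsum := sum_le_sum fun i (_ : i ∈ univ) => hfac i
  have hn := le_log_factorial (∑ i, f i)
  simp only [sum_add_distrib, sum_sub_distrib, sum_const, card_univ, nsmul_eq_mul] at hsum
  simp only [multinomialEntropy, Function.comp_apply, negMulLog, neg_mul, sum_neg_distrib]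
  push_cast at *
  linarith

theorem eventually_pow_le_multinomial_nsmul (f : ι → ℕ) {β : ℝ} (hβ : 0 < β)
    (hf : (∑ i, f i : ℕ) * log β < multinomialEntropy (Nat.cast ∘ f)) :
    ∀ᶠ m : ℕ in atTop, β ^ (m * ∑ i, f i) ≤ Nat.multinomial univ (m • f) := by
  set N := ∑ i, f i
  set C : ℝ := (Fintype.card ι : ℝ)
  have hsmall : (fun m : ℕ => C * (1 + log N) + C * log m) =o[atTop] (fun m : ℕ => (m : ℝ)) :=
    ((isLittleO_const_id_atTop (C * (1 + log N))).add
      (isLittleO_log_id_atTop.const_mul_left C)).comp_tendsto tendsto_natCast_atTop_atTop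
  filter_upwards [hsmall.bound (sub_pos.2 hf)] with m hm
  rw [norm_eq_abs, norm_eq_abs, Nat.abs_cast] at hm
  have hentropy := multinomialEntropy_sub_le_log_multinomial (m • f)
  rw [show Nat.cast ∘ (m • f) = (m : ℝ) • (Nat.cast ∘ f) by ext; simp,
    multinomialEntropy_smul,
    show ∑ i, (m • f) i = m * N by simp [N, mul_sum]] at hentropy
  have hlog := mul_le_mul_of_nonneg_left (log_natCast_mul_le m N) (by positivity : 0 ≤ C)
  have := Nat.multinomial_pos univ (m • f)
  rw [← log_le_log_iff (by positivity) (by positivity), log_pow]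
  push_cast at *
  linarith [le_abs_self (C * (1 + log N) + C * log m)]

end multinomialEntropy

def blockVector {R : Type*} (a b c : ℕ) (p q r : R) : Fin a ⊕ Fin b ⊕ Fin c → R :=
  Sum.elim (fun _ => p) (Sum.elim (fun _ => q) (fun _ => r))

section blockVector

variable (a b c : ℕ)

theorem sum_blockVector {R : Type*} [AddCommMonoid R] (p q r : R) :
    ∑ i, blockVector a b c p q r i = a • p + b • q + c • r := by
  simp [blockVector, Fintype.sum_sum_type, add_assoc]

theorem multinomialEntropy_blockVector (p q r : ℝ) :
    multinomialEntropy (blockVector a b c p q r) =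
      a * negMulLog p + b * negMulLog q + c * negMulLog r - negMulLog (a * p + b * q + c * r) := by
  simp [multinomialEntropy, blockVector, Fintype.sum_sum_type, add_assoc]

end blockVector

theorem multinomialEntropy_blockVector_eq {a b c : ℕ} (ha : 0 < a) (hb : 0 < b) {s : ℝ}
    (hs : 0 < s) (hs2 : s ^ 2 = 4 * a * b) :
    multinomialEntropy (blockVector a b c (b * s) (a * s) (2 * a * b)) =
      (∑ i, blockVector a b c (b * s) (a * s) (2 * a * b) i) * log (c + s) := by
  have hlog : log (b * s) + log (a * s) = 2 * log (2 * a * b) := by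
    rw [← log_mul (by positivity) (by positivity), two_mul,
      ← log_mul (by positivity) (by positivity)]
    congr 1
    linear_combination a * b * hs2
  rw [multinomialEntropy_blockVector, sum_blockVector]
  simp only [negMulLog, nsmul_eq_mul]
  rw [show (a : ℝ) * (b * s) + b * (a * s) + c * (2 * a * b) = 2 * a * b * (c + s) by ring,
    log_mul (x := 2 * a * b) (by positivity) (by positivity)]
  linear_combination (-(a * b * s : ℝ)) * hlog

theorem exists_rat_log_mul_lt_multinomialEntropy {a b c : ℕ} (ha : 0 < a) (hb : 0 < b) {β : ℝ}
    (hβ : 0 < β) (hβD : β < c + 2 * √(a * b)) :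
    ∃ q : ℚ, 0 < q ∧ (∑ i, blockVector a b c (b * q : ℝ) (a * q) (2 * a * b) i) * log β <
      multinomialEntropy (blockVector a b c (b * q : ℝ) (a * q) (2 * a * b)) := by
  set s := 2 * √(a * b)
  have hs : 0 < s := by positivity
  have hs2 : s ^ 2 = 4 * a * b := by
    rw [mul_pow, sq_sqrt (by positivity)]; ring
  set x : ℝ → Fin a ⊕ Fin b ⊕ Fin c → ℝ :=
    fun u => blockVector a b c (b * u) (a * u) (2 * a * b)
  have hx : Continuous x := continuous_pi fun i => by
    rcases i with i | i | i <;> simp only [x, blockVector, Sum.elim_inl, Sum.elim_inr] <;> fun_prop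
  set g : ℝ → ℝ := fun u => multinomialEntropy (x u) - (∑ i, x u i) * log β
  have hg : Continuous g :=
    (continuous_multinomialEntropy.comp hx).sub
      ((continuous_finsetSum _ fun i _ => (continuous_apply i).comp hx).mul continuous_const)
  have hgs : 0 < g s := by
    have := log_lt_log hβ hβD
    simp only [g, x, multinomialEntropy_blockVector_eq ha hb hs hs2, sum_blockVector, ← mul_sub]
    positivity
  obtain ⟨q, hq, hgq⟩ : ∃ q : ℚ, 0 < (q : ℝ) ∧ 0 < g q :=
    Rat.denseRange_cast.exists_mem_open ((isOpen_lt continuous_const continuous_id).inter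
      (isOpen_lt continuous_const hg)) ⟨s, hs, hgs⟩
  exact ⟨q, by exact_mod_cast hq, sub_pos.1 hgq⟩

theorem exists_balanced_log_mul_lt_multinomialEntropy {a b c : ℕ} (ha : 0 < a) (hb : 0 < b)
    {β : ℝ} (hβ : 0 < β) (hβD : β < c + 2 * √(a * b)) :
    ∃ f : Fin a ⊕ Fin b ⊕ Fin c → ℕ, 0 < ∑ i, f i ∧
      (∑ i, f (Sum.inl i)) = ∑ i, f (Sum.inr (Sum.inl i)) ∧
      (∑ i, f i : ℕ) * log β < multinomialEntropy (Nat.cast ∘ f) := by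
  obtain ⟨q, hq, hlt⟩ := exists_rat_log_mul_lt_multinomialEntropy (c := c) ha hb hβ hβD
  set u := q.num.toNat
  have hu : (u : ℝ) = q.den * q := by
    rw [← Int.cast_natCast, Int.toNat_of_nonneg (Rat.num_pos.2 hq).le]
    have := congrArg (Rat.cast : ℚ → ℝ) (Rat.mul_den_eq_num q)
    push_cast at this
    linarith
  set f := blockVector a b c (b * u) (a * u) (2 * a * b * q.den)
  have hcast :
      Nat.cast ∘ f = (q.den : ℝ) • blockVector a b c (b * q : ℝ) (a * q) (2 * a * b) := by
    ext (i | i | i) <;> simp [f, blockVector, hu] <;> ring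
  have hsum : ((∑ i, f i : ℕ) : ℝ) =
      q.den * ∑ i, blockVector a b c (b * q : ℝ) (a * q) (2 * a * b) i := by
    rw [Nat.cast_sum, mul_sum]
    exact congrArg (fun y => ∑ i, y i) hcast
  refine ⟨f, ?_, by simp [f, blockVector, mul_left_comm], ?_⟩
  · have : 0 < u := by exact_mod_cast (show (0 : ℝ) < u by rw [hu]; positivity)
    rw [sum_blockVector]
    positivity
  · rw [hcast, multinomialEntropy_smul, hsum, mul_assoc]
    exact mul_lt_mul_of_pos_left hlt (by exact_mod_cast q.den_pos)

def balancedMultinomialLengths (a b c : ℕ) (β : ℝ) : Set ℕ :=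
  {n | 0 < n ∧ ∃ f : Fin a ⊕ Fin b ⊕ Fin c → ℕ,
    (∑ i, f i) = n ∧ (∑ i, f (Sum.inl i)) = (∑ i, f (Sum.inr (Sum.inl i))) ∧
    β ^ n ≤ (Nat.multinomial univ f : ℝ)}

theorem balancedMultinomialLengths_infinite_of_nonpos {a b c : ℕ} (hc : 0 < c) {β : ℝ}
    (hβ : β ≤ 0) : (balancedMultinomialLengths a b c β).Infinite := by
  refine Set.infinite_of_forall_exists_gt fun k => ⟨2 * k + 1, ⟨by omega, ?_⟩, by omega⟩
  set f : Fin a ⊕ Fin b ⊕ Fin c → ℕ := Pi.single (Sum.inr (Sum.inr ⟨0, hc⟩)) (2 * k + 1)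
  have := Nat.multinomial_pos univ f
  refine ⟨f, by simp [f], by simp [f], ?_⟩
  exact (Odd.pow_nonpos (odd_two_mul_add_one k) hβ).trans (by positivity)

theorem balancedMultinomialLengths_infinite {a b c : ℕ} (ha : 0 < a) (hb : 0 < b) (hc : 0 < c)
    {β : ℝ} (hβ : β < c + 2 * √(a * b)) :
    (balancedMultinomialLengths a b c β).Infinite := by
  rcases le_or_gt β 0 with hβ0 | hβ0
  · exact balancedMultinomialLengths_infinite_of_nonpos hc hβ0
  obtain ⟨f, hN, hbal, hf⟩ := exists_balanced_log_mul_lt_multinomialEntropy ha hb hβ0 hβ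
  obtain ⟨m₀, hm₀⟩ := (eventually_pow_le_multinomial_nsmul f hβ0 hf).exists_forall_of_atTop
  refine Set.infinite_of_forall_exists_gt fun k =>
    ⟨max m₀ (k + 1) * ∑ i, f i, ⟨by positivity, max m₀ (k + 1) • f,
      by simp only [Pi.smul_apply, smul_eq_mul, ← mul_sum],
      by simp only [Pi.smul_apply, smul_eq_mul, ← mul_sum, hbal],
      hm₀ _ (le_max_left _ _)⟩, ?_⟩
  nlinarith [le_max_right m₀ (k + 1)]

theorem multinomial_lower_bound_general (t : ℕ) (ht : 2 ≤ t) (a b c : ℕ)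
    (ha : a = t * (t + 1) / 2) (hb : b = t * (t - 1) / 2) (hc : c = t ^ 2 - 1) :
    ∀ ε : ℝ, 0 < ε →
      {n : ℕ | 0 < n ∧ ∃ f : Fin a ⊕ Fin b ⊕ Fin c → ℕ,
        (∑ i, f i) = n ∧
        (∑ i, f (Sum.inl i)) = (∑ i, f (Sum.inr (Sum.inl i))) ∧
        ((t : ℝ) ^ 2 - 1 + t * Real.sqrt ((t : ℝ) ^ 2 - 1) - ε) ^ n ≤
          (Nat.multinomial Finset.univ f : ℝ)}.Infinite := by
  intro ε hε
  have h2a : 2 * a = t * (t + 1) := by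
    rw [ha, Nat.mul_div_cancel' (Nat.even_mul_succ_self t).two_dvd]
  have h2b : 2 * b = t * (t - 1) := by
    rw [hb, Nat.mul_div_cancel' (Nat.even_mul_pred_self t).two_dvd]
  have hc' : c = (t + 1) * (t - 1) := by simpa [hc] using Nat.sq_sub_sq t 1
  have h4ab : 4 * a * b = t ^ 2 * c := by
    rw [hc', show 4 * a * b = 2 * a * (2 * b) by ring, h2a, h2b]; ring
  have hcR : (c : ℝ) = t ^ 2 - 1 := by
    rw [hc, Nat.cast_sub (Nat.one_le_pow _ _ (by omega))]; push_cast; ring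
  have hsqrt : 2 * √(a * b : ℝ) = t * √(c : ℝ) := by
    rw [← sqrt_sq (zero_le_two : (0 : ℝ) ≤ 2), ← sqrt_mul (by positivity),
      ← sqrt_sq t.cast_nonneg, ← sqrt_mul (by positivity)]
    congr 1
    exact_mod_cast (show 2 ^ 2 * (a * b) = t ^ 2 * c by rw [← h4ab]; ring)
  have ht1 : 0 < t - 1 := by omega
  refine balancedMultinomialLengths_infinite (by nlinarith) (by nlinarith)
    (by rw [hc']; positivity) ?_
  rw [hsqrt, hcR]
  linarith

/-- Lower bound for the graded codimension sequence: with `a = t(t+1)/2`,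
`b = t(t−1)/2`, `c = t²−1`, `d = a+b+c`, for every `ε > 0` there are infinitely many
positive integers `n` admitting nonnegative integers `n₁,…,n_d` with sum `n`, with the
first `a` of them and the next `b` of them having equal sums, whose multinomial
coefficient is at least `(t²−1+t√(t²−1)−ε)^n`. -/
theorem multinomial_lower_bound (t : ℕ) (ht : 2 ≤ t) (a b c d : ℕ)
    (ha : a = t * (t + 1) / 2) (hb : b = t * (t - 1) / 2) (hc : c = t ^ 2 - 1)
    (hd : d = a + b + c) :
    ∀ ε : ℝ, 0 < ε →
      {n : ℕ | 0 < n ∧ ∃ f : Fin a ⊕ Fin b ⊕ Fin c → ℕ,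
        (∑ i, f i) = n ∧
        (∑ i, f (Sum.inl i)) = (∑ i, f (Sum.inr (Sum.inl i))) ∧
        ((t : ℝ) ^ 2 - 1 + t * Real.sqrt ((t : ℝ) ^ 2 - 1) - ε) ^ n ≤
          (Nat.multinomial Finset.univ f : ℝ)}.Infinite :=
  multinomial_lower_bound_general t ht a b c ha hb hc
end
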